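/- Let K be a field, n ≥ 2, and x_1, …, x_{n+1} ∈ K with x_i ≠ 0 and x_i ≠ 1 for all i, and suppose x_1 x_2 ⋯ x_{n+1} = 1. Write π_i = x_1 x_2 ⋯ x_i and w = Σ_{i=1}^{n} (1 − π_i) ε_i ∈ K^n. Then the K-subspaces of K^n invariant under every specialized reduced Gassner matrix T_i are exactly 0, the line K·w, and K^n; in particular, the induced action of the group generated by T_1, …, T_n on the quotient K^n / K·w is irreducible. -/

import Mathlib

/-- `T` is the family of specialized reduced Gassner matrices for the parameters `x`:
on the standard basis (`0`-based indices), `T i ε_{i-1} = ε_{i-1} + x_i (1 - x_{i+1}) ε_i`,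
`T i ε_i = x_i x_{i+1} ε_i`, `T i ε_{i+1} = (1 - x_i) ε_i + ε_{i+1}`, and `T i ε_j = ε_j`
for `|i - j| ≥ 2`. -/
def IsGassnerMatrices {K : Type*} [Field K] {n : ℕ} (x : Fin (n + 1) → K)
    (T : Fin n → Matrix (Fin n) (Fin n) K) : Prop :=
  ∀ i k : Fin n,
    (T i).mulVec (Pi.single k 1) =
      if k = i then (x i.castSucc * x i.succ) • (Pi.single i 1 : Fin n → K)
      else if (k : ℕ) + 1 = (i : ℕ) then
        (Pi.single k 1 : Fin n → K) + (x i.castSucc * (1 - x i.succ)) • (Pi.single i 1 : Fin n → K)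
      else if (k : ℕ) = (i : ℕ) + 1 then
        (1 - x i.castSucc) • (Pi.single i 1 : Fin n → K) + (Pi.single k 1 : Fin n → K)
      else (Pi.single k 1 : Fin n → K)

/-!
Each `T i` changes only the `i`-th coordinate, replacing `vᵢ` by
`xᵢ xᵢ₊₁ vᵢ + xᵢ (1 - xᵢ₊₁) vᵢ₋₁ + (1 - xᵢ) vᵢ₊₁` (0-based, with `v₋₁ = vₙ = 0`).
If an invariant subspace contains a vector moved by some `T i`, it contains `εᵢ`; since the
off-diagonal coefficients `xᵢ (1 - xᵢ₊₁)` and `1 - xᵢ` are nonzero, it then contains every `εⱼ`.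
Otherwise all its vectors are fixed by every `T i`. A fixed vector is determined by its first
coordinate through the recurrence, so the subspace lies in `K ∙ w`: indeed `w` is fixed, as
`wᵢ = 1 - π_{i+1}` extends to `1 - π_m` for `0 ≤ m ≤ n + 1`, which vanishes at both ends since
`π₀ = 1 = π_{n+1}`, and satisfies the recurrence identically.
-/

theorem Fin.forall_of_iff_succ {n : ℕ} {p : Fin n → Prop}
    (h : ∀ (k : ℕ) (hk : k + 1 < n), p ⟨k, by omega⟩ ↔ p ⟨k + 1, hk⟩)
    {i : Fin n} (hi : p i) (j : Fin n) : p j := by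
  have h0 : ∀ (m : ℕ) (hm : m < n), p ⟨m, hm⟩ ↔ p ⟨0, by omega⟩ := by
    intro m
    induction m with
    | zero => exact fun _ => Iff.rfl
    | succ m ih => exact fun hm => (h m hm).symm.trans (ih _)
  exact (h0 j j.2).2 ((h0 i i.2).1 hi)

namespace Gassner

variable {K : Type*} [Field K] {n : ℕ}

/-- `v` placed at positions `1, …, n` of `ℕ`, zero elsewhere: the boundary terms of the
three-term recurrence below then vanish on their own. -/
noncomputable def pad : (Fin n → K) →ₗ[K] ℕ → K :=
  Function.ExtendByZero.linearMap K fun k : Fin n => (k : ℕ) + 1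

theorem pad_succ (v : Fin n → K) (k : Fin n) : pad v ((k : ℕ) + 1) = v k :=
  Function.Injective.extend_apply (fun _ _ h => Fin.ext (Nat.add_right_cancel h)) v 0 k

theorem pad_eq_zero (v : Fin n → K) {m : ℕ} (hm : m = 0 ∨ n < m) : pad v m = 0 :=
  Function.extend_apply' _ _ _ fun ⟨k, hk⟩ => by omega

theorem sum_ite_val_add_one_eq_pad (v : Fin n → K) (m : ℕ) :
    ∑ k : Fin n, (if (k : ℕ) + 1 = m then v k else 0) = pad v m := by
  by_cases hm : ∃ k : Fin n, (k : ℕ) + 1 = m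
  · obtain ⟨k, rfl⟩ := hm
    rw [pad_succ, Finset.sum_eq_single k (fun j _ hj => if_neg fun h => hj (Fin.ext (by omega)))
      (by simp), if_pos rfl]
  · rw [Finset.sum_eq_zero fun k _ => if_neg fun h => hm ⟨k, h⟩]
    exact (Function.extend_apply' v (0 : ℕ → K) m hm).symm

/-- `x₀ ⋯ x_{m-1}`, i.e. `π_m` in the statement's 1-based notation. -/
def prefixProd (x : Fin (n + 1) → K) (m : ℕ) : K :=
  ∏ j ∈ Finset.univ.filter fun j : Fin (n + 1) => (j : ℕ) < m, x j

theorem prefixProd_zero (x : Fin (n + 1) → K) : prefixProd x 0 = 1 := by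
  simp [prefixProd]

theorem prefixProd_succ (x : Fin (n + 1) → K) (j : Fin (n + 1)) :
    prefixProd x ((j : ℕ) + 1) = prefixProd x j * x j := by
  have : Finset.univ.filter (fun i : Fin (n + 1) => (i : ℕ) < j + 1) =
      insert j (Finset.univ.filter fun i : Fin (n + 1) => (i : ℕ) < j) := by
    ext i
    simp only [Finset.mem_filter, Finset.mem_univ, true_and, Finset.mem_insert, Fin.ext_iff]
    omega
  rw [prefixProd, prefixProd, this, Finset.prod_insert (by simp), mul_comm]

theorem prefixProd_of_le (x : Fin (n + 1) → K) {m : ℕ} (hm : n + 1 ≤ m) :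
    prefixProd x m = ∏ j, x j := by
  rw [prefixProd, Finset.filter_true_of_mem fun j _ => by omega]

theorem prod_Iic_eq_prefixProd (x : Fin (n + 1) → K) (j : Fin (n + 1)) :
    ∏ i ∈ Finset.Iic j, x i = prefixProd x ((j : ℕ) + 1) := by
  rw [prefixProd]
  congr 1
  refine Finset.ext fun i => ?_
  rw [Finset.mem_Iic, Finset.mem_filter, Fin.le_def]
  simp only [Finset.mem_univ, true_and]
  omega

def fixedVector (x : Fin (n + 1) → K) (i : Fin n) : K := 1 - ∏ j ∈ Finset.Iic i.castSucc, x j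

theorem pad_fixedVector {x : Fin (n + 1) → K} (hprod : ∏ i, x i = 1) {m : ℕ} (hm : m ≤ n + 1) :
    pad (fixedVector x) m = 1 - prefixProd x m := by
  rcases m with _ | m
  · rw [pad_eq_zero _ (Or.inl rfl), prefixProd_zero, sub_self]
  by_cases hmn : m < n
  · rw [pad_succ _ ⟨m, hmn⟩, fixedVector, prod_Iic_eq_prefixProd, Fin.val_castSucc]
  · rw [pad_eq_zero _ (Or.inr (by omega)), prefixProd_of_le x (by omega), hprod, sub_self]

end Gassner

namespace IsGassnerMatrices

open Gassner Matrix

variable {K : Type*} [Field K] {n : ℕ} {x : Fin (n + 1) → K}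
  {T : Fin n → Matrix (Fin n) (Fin n) K}

theorem apply_self (hT : IsGassnerMatrices x T) (i k : Fin n) :
    T i i k =
      if k = i then x i.castSucc * x i.succ
      else if (k : ℕ) + 1 = i then x i.castSucc * (1 - x i.succ)
      else if (k : ℕ) = i + 1 then 1 - x i.castSucc
      else 0 := by
  have h := congrFun (hT i k) i
  rw [mulVec_single_one, col_apply] at h
  rw [h]
  split_ifs <;> simp_all [Fin.ext_iff]

theorem apply_of_ne (hT : IsGassnerMatrices x T) {i j : Fin n} (hji : j ≠ i) (k : Fin n) :
    T i j k = (Pi.single j 1 : Fin n → K) k := by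
  have h := congrFun (hT i k) j
  rw [mulVec_single_one, col_apply] at h
  rw [h]
  split_ifs <;> simp_all [Pi.single_apply, eq_comm]

theorem mulVec_apply_of_ne (hT : IsGassnerMatrices x T) {i j : Fin n} (hji : j ≠ i)
    (v : Fin n → K) : (T i *ᵥ v) j = v j := by
  rw [mulVec, ← single_one_dotProduct j v]
  exact congrArg (· ⬝ᵥ v) (funext (apply_of_ne hT hji))

theorem mulVec_apply_self (hT : IsGassnerMatrices x T) (i : Fin n) (v : Fin n → K) :
    (T i *ᵥ v) i = x i.castSucc * x i.succ * v i + x i.castSucc * (1 - x i.succ) * pad v i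
      + (1 - x i.castSucc) * pad v (i + 2) := by
  have hterm : ∀ k, T i i k * v k = x i.castSucc * x i.succ * (if k = i then v k else 0)
      + x i.castSucc * (1 - x i.succ) * (if (k : ℕ) + 1 = i then v k else 0)
      + (1 - x i.castSucc) * (if (k : ℕ) + 1 = i + 2 then v k else 0) := by
    intro k
    rw [apply_self hT]
    split_ifs <;> simp_all [Fin.ext_iff]
  simp only [mulVec, dotProduct, hterm, Finset.sum_add_distrib, ← Finset.mul_sum,
    Finset.sum_ite_eq', Finset.mem_univ, if_true, sum_ite_val_add_one_eq_pad]

theorem mulVec_sub_self (hT : IsGassnerMatrices x T) (i : Fin n) (v : Fin n → K) :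
    T i *ᵥ v - v = ((T i *ᵥ v) i - v i) • Pi.single i 1 := by
  ext j
  by_cases hji : j = i
  · subst hji
    simp
  · simp [mulVec_apply_of_ne hT hji, hji]

theorem single_mem_of_mulVec_apply_ne (hT : IsGassnerMatrices x T) {i : Fin n}
    {U : Submodule K (Fin n → K)} (hU : ∀ v ∈ U, T i *ᵥ v ∈ U) {v : Fin n → K} (hv : v ∈ U)
    (h : (T i *ᵥ v) i ≠ v i) : Pi.single i 1 ∈ U := by
  have hsub := U.sub_mem (hU v hv) hv
  rwa [mulVec_sub_self hT, U.smul_mem_iff (sub_ne_zero.2 h)] at hsub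

theorem single_mem_of_apply_ne_zero (hT : IsGassnerMatrices x T) {i k : Fin n}
    {U : Submodule K (Fin n → K)} (hU : ∀ v ∈ U, T i *ᵥ v ∈ U) (hki : k ≠ i)
    (hk : Pi.single k 1 ∈ U) (h : T i i k ≠ 0) : Pi.single i 1 ∈ U :=
  single_mem_of_mulVec_apply_ne hT hU hk <| by
    rwa [mulVec_single_one, col_apply, Pi.single_eq_of_ne (Ne.symm hki)]

theorem eq_top_of_single_mem (hT : IsGassnerMatrices x T) (h0 : ∀ i, x i ≠ 0)
    (h1 : ∀ i, x i ≠ 1) {U : Submodule K (Fin n → K)}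
    (hU : ∀ i, ∀ v ∈ U, T i *ᵥ v ∈ U) {i : Fin n} (hi : Pi.single i 1 ∈ U) : U = ⊤ := by
  have hchain (k : ℕ) (hk : k + 1 < n) :
      Pi.single (⟨k, by omega⟩ : Fin n) (1 : K) ∈ U ↔ Pi.single ⟨k + 1, hk⟩ 1 ∈ U := by
    have hne : (⟨k, by omega⟩ : Fin n) ≠ ⟨k + 1, hk⟩ := by simp [Fin.ext_iff]
    constructor
    · refine fun h => single_mem_of_apply_ne_zero hT (hU _) hne h ?_
      rw [apply_self hT, if_neg hne, if_pos rfl]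
      exact mul_ne_zero (h0 _) (sub_ne_zero.2 (h1 _).symm)
    · refine fun h => single_mem_of_apply_ne_zero hT (hU _) hne.symm h ?_
      rw [apply_self hT, if_neg hne.symm, if_neg (by dsimp only; omega), if_pos rfl]
      exact sub_ne_zero.2 (h1 _).symm
  have hall := Fin.forall_of_iff_succ (p := fun j => Pi.single j (1 : K) ∈ U) hchain hi
  rw [eq_top_iff, ← (Pi.basisFun K (Fin n)).span_eq, Submodule.span_le]
  rintro _ ⟨j, rfl⟩
  simpa using hall j

theorem eq_zero_of_forall_mulVec_eq_self (hT : IsGassnerMatrices x T) (h1 : ∀ i, x i ≠ 1)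
    {u : Fin n → K} (hu : ∀ i, T i *ᵥ u = u) (hu1 : pad u 1 = 0) : u = 0 := by
  have hpad (m : ℕ) : pad u m = 0 ∧ pad u (m + 1) = 0 := by
    induction m with
    | zero => exact ⟨pad_eq_zero u (Or.inl rfl), hu1⟩
    | succ m ih =>
      refine ⟨ih.2, ?_⟩
      by_cases hm : m < n
      · have hrow := mulVec_apply_self hT ⟨m, hm⟩ u
        rw [hu, ← pad_succ u ⟨m, hm⟩] at hrow
        simp only [ih.1, ih.2] at hrow
        have : (1 - x (Fin.castSucc ⟨m, hm⟩)) * pad u (m + 2) = 0 := by linear_combination -hrow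
        exact (mul_eq_zero.1 this).resolve_left (sub_ne_zero.2 (h1 _).symm)
      · exact pad_eq_zero u (Or.inr (by omega))
  ext k
  simpa [pad_succ] using (hpad k).2

theorem mulVec_fixedVector (hT : IsGassnerMatrices x T) (hprod : ∏ i, x i = 1) (i : Fin n) :
    T i *ᵥ fixedVector x = fixedVector x := by
  rw [← sub_eq_zero, mulVec_sub_self hT, mulVec_apply_self hT, smul_eq_zero]
  left
  have hi := pad_fixedVector hprod (m := i) (by omega)
  have hi1 := pad_fixedVector hprod (m := i + 1) (by omega)
  have hi2 := pad_fixedVector hprod (m := i + 2) (by omega)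
  have p1 := prefixProd_succ x i.castSucc
  have p2 := prefixProd_succ x i.succ
  rw [pad_succ] at hi1
  simp only [Fin.val_castSucc, Fin.val_succ] at p1 p2
  rw [hi, hi1, hi2, p2, p1]
  ring

theorem pad_fixedVector_one_ne_zero (h1 : ∀ i, x i ≠ 1) (hprod : ∏ i, x i = 1) :
    pad (fixedVector x) 1 ≠ 0 := by
  have hx0 : prefixProd x 1 = x 0 := by simpa [prefixProd_zero] using prefixProd_succ x 0
  rw [pad_fixedVector hprod (by omega), hx0]
  exact sub_ne_zero.2 (h1 0).symm

theorem mem_span_fixedVector (hT : IsGassnerMatrices x T) (h1 : ∀ i, x i ≠ 1)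
    (hprod : ∏ i, x i = 1) {v : Fin n → K} (hv : ∀ i, T i *ᵥ v = v) :
    v ∈ K ∙ fixedVector x := by
  set c := pad v 1 / pad (fixedVector x) 1
  have hzero : v - c • fixedVector x = 0 := by
    refine eq_zero_of_forall_mulVec_eq_self hT h1 (fun i => ?_) ?_
    · rw [mulVec_sub, mulVec_smul, hv, mulVec_fixedVector hT hprod]
    · rw [map_sub, map_smul, Pi.sub_apply, Pi.smul_apply, smul_eq_mul,
        div_mul_cancel₀ _ (pad_fixedVector_one_ne_zero h1 hprod), sub_self]
  exact Submodule.mem_span_singleton.2 ⟨c, (sub_eq_zero.1 hzero).symm⟩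

theorem forall_mulVec_mem_iff (hT : IsGassnerMatrices x T) (h0 : ∀ i, x i ≠ 0)
    (h1 : ∀ i, x i ≠ 1) (hprod : ∏ i, x i = 1) (U : Submodule K (Fin n → K)) :
    (∀ i, ∀ v ∈ U, T i *ᵥ v ∈ U) ↔ U = ⊥ ∨ U = K ∙ fixedVector x ∨ U = ⊤ := by
  constructor
  · intro hU
    by_cases hfix : ∀ v ∈ U, ∀ i, (T i *ᵥ v) i = v i
    · have hle : U ≤ K ∙ fixedVector x := fun v hv => mem_span_fixedVector hT h1 hprod fun i => by
        rw [← sub_eq_zero, mulVec_sub_self hT, hfix v hv i, sub_self, zero_smul]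
      have hw : fixedVector x ≠ 0 := fun h =>
        pad_fixedVector_one_ne_zero h1 hprod (by rw [h, map_zero, Pi.zero_apply])
      exact ((nonzero_span_atom _ hw).le_iff.1 hle).imp_right Or.inl
    · push Not at hfix
      obtain ⟨v, hv, i, hi⟩ := hfix
      exact Or.inr (Or.inr (eq_top_of_single_mem hT h0 h1 hU
        (single_mem_of_mulVec_apply_ne hT (hU i) hv hi)))
  · rintro (rfl | rfl | rfl) i v hv
    · rw [Submodule.mem_bot] at hv ⊢
      rw [hv, mulVec_zero]
    · obtain ⟨c, rfl⟩ := Submodule.mem_span_singleton.1 hv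
      rw [mulVec_smul, mulVec_fixedVector hT hprod]
      exact Submodule.smul_mem _ _ (Submodule.mem_span_singleton_self _)
    · exact Submodule.mem_top

end IsGassnerMatrices

theorem stmt_16_general (K : Type*) [Field K] (n : ℕ)
    (x : Fin (n + 1) → K) (h0 : ∀ i, x i ≠ 0) (h1 : ∀ i, x i ≠ 1)
    (hprod : ∏ i, x i = 1)
    (T : Fin n → Matrix (Fin n) (Fin n) K) (hT : IsGassnerMatrices x T)
    (w : Fin n → K) (hw : ∀ i : Fin n, w i = 1 - ∏ j ∈ Finset.Iic i.castSucc, x j) :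
    (∀ U : Submodule K (Fin n → K),
      (∀ i : Fin n, ∀ v ∈ U, (T i).mulVec v ∈ U) ↔
        (U = ⊥ ∨ U = Submodule.span K {w} ∨ U = ⊤)) ∧
    (∀ U : Submodule K (Fin n → K), Submodule.span K {w} ≤ U →
      (∀ i : Fin n, ∀ v ∈ U, (T i).mulVec v ∈ U) →
      U = Submodule.span K {w} ∨ U = ⊤) := by
  obtain rfl : w = Gassner.fixedVector x := funext hw
  have hinv := IsGassnerMatrices.forall_mulVec_mem_iff hT h0 h1 hprod
  refine ⟨hinv, fun U hle hU => ?_⟩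
  rcases (hinv U).1 hU with rfl | hspan | htop
  · exact Or.inl (le_bot_iff.1 hle).symm
  · exact Or.inl hspan
  · exact Or.inr htop

/-- For `n ≥ 2` and `x₁ x₂ ⋯ x_{n+1} = 1`, with
`w = Σᵢ (1 - π_i) εᵢ` (`π_i = x₁ ⋯ x_i`), the subspaces of `K^n` invariant under all the
specialized reduced Gassner matrices are exactly `0`, the line `K • w`, and `K^n`; in
particular the induced action on the quotient `K^n / K • w` is irreducible. -/
theorem stmt_16 (K : Type*) [Field K] (n : ℕ) (hn : 2 ≤ n)
    (x : Fin (n + 1) → K) (h0 : ∀ i, x i ≠ 0) (h1 : ∀ i, x i ≠ 1)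
    (hprod : ∏ i, x i = 1)
    (T : Fin n → Matrix (Fin n) (Fin n) K) (hT : IsGassnerMatrices x T)
    (w : Fin n → K) (hw : ∀ i : Fin n, w i = 1 - ∏ j ∈ Finset.Iic i.castSucc, x j) :
    (∀ U : Submodule K (Fin n → K),
      (∀ i : Fin n, ∀ v ∈ U, (T i).mulVec v ∈ U) ↔
        (U = ⊥ ∨ U = Submodule.span K {w} ∨ U = ⊤)) ∧
    (∀ U : Submodule K (Fin n → K), Submodule.span K {w} ≤ U →
      (∀ i : Fin n, ∀ v ∈ U, (T i).mulVec v ∈ U) →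
      U = Submodule.span K {w} ∨ U = ⊤) :=
  stmt_16_general K n x h0 h1 hprod T hT w hw
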